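/- Let b, c ∈ ℝ and a ∈ ℝ∖{0}. Let h be the monic Hermite polynomials and for n ≥ 0 define the 2×2 matrix polynomial Qₙ(x) = [[hₙ(x−b), a(hₙ₊₁(x−c) − x·hₙ(x−b))], [−a·(n/2)·e^{c²−b²}·hₙ₋₁(x−b), a²·(n/2)·e^{c²−b²}·x·hₙ₋₁(x−b) + hₙ(x−c)]] (for n = 0 the terms with factor n vanish). Then for all n ≥ 0 and all x: Qₙ''(x) + Qₙ'(x)·[[−2x+2b, 2ax(c−b)+2a], [0, −2x+2c]] + Qₙ(x)·[[−2, 2ac], [0, 0]] = [[−2n−2, 0], [0, −2n]]·Qₙ(x). (Qₙ is the sequence of orthogonal polynomials for the weight W(x) = e^{−x²}[[e^{2bx}+a²x²e^{2cx}, axe^{2cx}],[axe^{2cx}, e^{2cx}]] on ℝ.) -/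

import Mathlib

/-!
Orthogonality forces the Hermite equation `hₙ'' - 2x hₙ' + 2n hₙ = 0`. Integration by parts
against `e^{-x²}` makes `L = ∂² - 2x∂` symmetric; `L` preserves degree `< n`, and
`L hₙ + 2n hₙ` has degree `< n` because the leading terms cancel. Since `hₙ` is orthogonal to all
polynomials of degree `< n`, so is `L hₙ + 2n hₙ`, which is thus orthogonal to itself and vanishes.
Each entry of the matrix equation is then a linear combination of instances of the Hermite
equation at `x - b` and `x - c`.
-/

open MeasureTheory Matrix Polynomial

noncomputable section

/-- The 2×2 Hermite-type matrix orthogonal polynomials built from the monic Hermite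
polynomials `h` and shifts `b, c` (for `n = 0` the terms with factor `n` vanish). -/
def QHer (b c a : ℝ) (h : ℕ → Polynomial ℝ) (n : ℕ) (x : ℝ) :
    Matrix (Fin 2) (Fin 2) ℝ :=
  !![(h n).eval (x - b),
     a * ((h (n + 1)).eval (x - c) - x * (h n).eval (x - b));
     -(a * ((n : ℝ) / 2) * Real.exp (c ^ 2 - b ^ 2) * (h (n - 1)).eval (x - b)),
     a ^ 2 * ((n : ℝ) / 2) * Real.exp (c ^ 2 - b ^ 2) * x * (h (n - 1)).eval (x - b)
       + (h n).eval (x - c)]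

theorem integrable_eval_mul_exp_neg_sq (p : ℝ[X]) :
    Integrable fun x : ℝ => p.eval x * Real.exp (-x ^ 2) := by
  induction p using Polynomial.induction_on' with
  | add p q hp hq => exact (hp.add hq).congr (.of_forall fun x => by simp [add_mul])
  | monomial n a =>
    have := (integrable_rpow_mul_exp_neg_mul_sq one_pos
      (s := n) (by linarith [n.cast_nonneg (α := ℝ)])).const_mul a
    simpa [mul_assoc] using this

def gaussIntegral : ℝ[X] →ₗ[ℝ] ℝ where
  toFun p := ∫ x, p.eval x * Real.exp (-x ^ 2)
  map_add' p q := by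
    simpa [add_mul] using
      integral_add (integrable_eval_mul_exp_neg_sq p) (integrable_eval_mul_exp_neg_sq q)
  map_smul' r p := by simp [mul_assoc, integral_const_mul]

theorem gaussIntegral_apply (p : ℝ[X]) :
    gaussIntegral p = ∫ x, p.eval x * Real.exp (-x ^ 2) := rfl

theorem gaussIntegral_derivative (p : ℝ[X]) :
    gaussIntegral (derivative p) = gaussIntegral (2 * X * p) := by
  have hderiv (x : ℝ) : HasDerivAt (fun x => p.eval x * Real.exp (-x ^ 2))
      ((derivative p - 2 * X * p).eval x * Real.exp (-x ^ 2)) x := by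
    have hexp : HasDerivAt (fun x : ℝ => -x ^ 2) (-(2 * x)) x := by
      simpa using (hasDerivAt_pow 2 x).fun_neg
    refine ((p.hasDerivAt x).mul hexp.exp).congr_deriv ?_
    simp only [eval_sub, eval_mul, eval_X, eval_ofNat]
    ring
  rw [← sub_eq_zero, ← map_sub]
  exact integral_eq_zero_of_hasDerivAt_of_integrable hderiv
    (integrable_eval_mul_exp_neg_sq _) (integrable_eval_mul_exp_neg_sq p)

def gaussForm : LinearMap.BilinForm ℝ ℝ[X] := (LinearMap.mul ℝ ℝ[X]).compr₂ gaussIntegral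

theorem gaussForm_apply (p q : ℝ[X]) : gaussForm p q = gaussIntegral (p * q) := rfl

theorem gaussForm_comm (p q : ℝ[X]) : gaussForm p q = gaussForm q p := by
  rw [gaussForm_apply, gaussForm_apply, mul_comm]

theorem gaussForm_self_pos {p : ℝ[X]} (hp : p ≠ 0) : 0 < gaussForm p p := by
  obtain ⟨x, hx⟩ := (p.finite_setOfPred_isRoot hp).infinite_compl.nonempty
  rw [gaussForm_apply, gaussIntegral_apply]
  refine integral_pos_of_integrable_nonneg_nonzero (x := x) (by fun_prop)
    (integrable_eval_mul_exp_neg_sq _) (fun y => ?_) ?_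
  · simp only [eval_mul, Pi.zero_apply]
    exact mul_nonneg (mul_self_nonneg _) (Real.exp_pos _).le
  · simpa [Real.exp_ne_zero] using hx

def hermiteOp (p : ℝ[X]) : ℝ[X] := derivative (derivative p) - 2 * X * derivative p

theorem gaussForm_hermiteOp_left (p q : ℝ[X]) :
    gaussForm (hermiteOp p) q = -gaussIntegral (derivative p * derivative q) := by
  have ibp := gaussIntegral_derivative (derivative p * q)
  rw [derivative_mul, map_add] at ibp
  rw [gaussForm_apply, hermiteOp, sub_mul, map_sub, mul_assoc, ← ibp]
  ring

theorem gaussForm_hermiteOp_comm (p q : ℝ[X]) :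
    gaussForm (hermiteOp p) q = gaussForm p (hermiteOp q) := by
  rw [gaussForm_comm p, gaussForm_hermiteOp_left, gaussForm_hermiteOp_left, mul_comm]

theorem coeff_X_mul_derivative (p : ℝ[X]) (m : ℕ) :
    (X * derivative p).coeff m = m * p.coeff m := by
  cases m with
  | zero => simp
  | succ m => simp [coeff_X_mul, coeff_derivative, mul_comm]

theorem coeff_hermiteOp (p : ℝ[X]) (m : ℕ) :
    (hermiteOp p).coeff m = (m + 1) * (m + 2) * p.coeff (m + 2) - 2 * m * p.coeff m := by
  simp only [hermiteOp, mul_assoc, coeff_sub, coeff_ofNat_mul, coeff_derivative,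
    coeff_X_mul_derivative, Nat.cast_add, Nat.cast_one]
  ring

theorem hermiteOp_mem_degreeLT {p : ℝ[X]} {n : ℕ} (hp : p ∈ degreeLT ℝ n) :
    hermiteOp p ∈ degreeLT ℝ n := by
  rw [mem_degreeLT, degree_lt_iff_coeff_zero] at *
  intro m hm
  rw [coeff_hermiteOp, hp m hm, hp (m + 2) (by omega)]
  ring

theorem hermiteOp_add_smul_mem_degreeLT {p : ℝ[X]} {n : ℕ} (hp : p.natDegree ≤ n) :
    hermiteOp p + (2 * n : ℝ) • p ∈ degreeLT ℝ n := by
  rw [mem_degreeLT, degree_lt_iff_coeff_zero]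
  intro m hm
  rw [coeff_add, coeff_smul, coeff_hermiteOp,
    coeff_eq_zero_of_natDegree_lt (by omega : p.natDegree < m + 2)]
  rcases hm.eq_or_lt with rfl | hlt
  · simp
  · rw [coeff_eq_zero_of_natDegree_lt (by omega)]
    simp

theorem gaussForm_eq_zero_of_mem_degreeLT (S : Polynomial.Sequence ℝ)
    (horth : ∀ i j, i ≠ j → gaussForm (S i) (S j) = 0) {n : ℕ} {q : ℝ[X]}
    (hq : q ∈ degreeLT ℝ n) : gaussForm q (S n) = 0 := by
  rw [← S.span_degreeLT fun i _ => (leadingCoeff_ne_zero.2 (S.ne_zero i)).isUnit] at hq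
  have : Submodule.span ℝ (S '' Set.Iio n) ≤ LinearMap.ker (gaussForm.flip (S n)) :=
    Submodule.span_le.2 (by rintro _ ⟨i, hi, rfl⟩; exact horth i n hi.ne)
  exact this hq

theorem hermiteOp_add_smul_eq_zero (S : Polynomial.Sequence ℝ)
    (horth : ∀ i j, i ≠ j → gaussForm (S i) (S j) = 0) (n : ℕ) :
    hermiteOp (S n) + (2 * n : ℝ) • S n = 0 := by
  set R := hermiteOp (S n) + (2 * n : ℝ) • S n
  have hR : R ∈ degreeLT ℝ n := hermiteOp_add_smul_mem_degreeLT (S.natDegree_eq n).le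
  have hRorth : gaussForm R R = 0 := by
    rw [map_add, map_smul, ← gaussForm_hermiteOp_comm,
      gaussForm_eq_zero_of_mem_degreeLT S horth (hermiteOp_mem_degreeLT hR),
      gaussForm_eq_zero_of_mem_degreeLT S horth hR, smul_zero, add_zero]
  by_contra hne
  exact (gaussForm_self_pos hne).ne' hRorth

def QHerPoly (b c a : ℝ) (h : ℕ → ℝ[X]) (n : ℕ) : Matrix (Fin 2) (Fin 2) ℝ[X] :=
  !![(h n).comp (X - C b),
     C a * ((h (n + 1)).comp (X - C c) - X * (h n).comp (X - C b));
     -C (a * (n / 2) * Real.exp (c ^ 2 - b ^ 2)) * (h (n - 1)).comp (X - C b),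
     C (a ^ 2 * (n / 2) * Real.exp (c ^ 2 - b ^ 2)) * X * (h (n - 1)).comp (X - C b)
       + (h n).comp (X - C c)]

theorem QHerPoly_map_eval (b c a : ℝ) (h : ℕ → ℝ[X]) (n : ℕ) (x : ℝ) :
    (QHerPoly b c a h n).map (eval x) = QHer b c a h n x := by
  ext i j
  fin_cases i <;> fin_cases j <;> simp [QHerPoly, QHer, eval_comp]

theorem deriv_QHer_apply (b c a : ℝ) (h : ℕ → ℝ[X]) (n : ℕ) (i j : Fin 2) :
    deriv (fun y => QHer b c a h n y i j)
      = fun y => (derivative (QHerPoly b c a h n i j)).eval y := by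
  funext y
  simp only [← QHerPoly_map_eval, map_apply, Polynomial.deriv]

theorem QHerPoly_eigen_eval (b c a : ℝ) {h : ℕ → ℝ[X]}
    (hode : ∀ m : ℕ, hermiteOp (h m) + (2 * m : ℝ) • h m = 0) (n : ℕ) (x : ℝ) :
    (QHerPoly b c a h n).map (fun p => (derivative (derivative p)).eval x)
      + (QHerPoly b c a h n).map (fun p => (derivative p).eval x) *
          !![-2 * x + 2 * b, 2 * a * x * (c - b) + 2 * a; 0, -2 * x + 2 * c]
      + (QHerPoly b c a h n).map (eval x) * !![-2, 2 * a * c; 0, 0]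
      = !![-2 * (n : ℝ) - 2, 0; 0, -2 * (n : ℝ)] * (QHerPoly b c a h n).map (eval x) := by
  have ode (m : ℕ) (t : ℝ) : (derivative (derivative (h m))).eval t
      = 2 * t * (derivative (h m)).eval t - 2 * m * (h m).eval t := by
    have := congrArg (eval t) (hode m)
    simp only [hermiteOp, eval_add, eval_sub, eval_mul, eval_smul, eval_X, eval_ofNat,
      eval_zero, smul_eq_mul] at this
    linear_combination this
  -- `n - 1` truncates at `n = 0`, where the factor `n` kills the affected terms.
  have hcast : (n : ℝ) * ((n - 1 : ℕ) : ℝ) = n * (n - 1) := by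
    cases n <;> simp
  ext i j
  fin_cases i <;> fin_cases j <;>
    simp only [QHerPoly, Matrix.add_apply, Matrix.mul_apply, Fin.sum_univ_two, map_apply,
      of_apply, cons_val', cons_val_zero, cons_val_one, cons_val_fin_one, Fin.zero_eta, Fin.mk_one,
      Fin.isValue, derivative_add, derivative_sub, derivative_neg, derivative_mul, derivative_comp,
      derivative_X, derivative_C, eval_add, eval_sub, eval_neg, eval_mul, eval_comp, eval_X, eval_C,
      derivative_zero, derivative_one, eval_zero, eval_one]
  · linear_combination ode n (x - b)
  · linear_combination a * ode (n + 1) (x - c) - a * x * ode n (x - b)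
      - 2 * a * (h (n + 1)).eval (x - c) * Nat.cast_succ (R := ℝ) n
  · linear_combination (-(a * ((n : ℝ) / 2) * Real.exp (c ^ 2 - b ^ 2))) * ode (n - 1) (x - b)
      + (a * Real.exp (c ^ 2 - b ^ 2) * (h (n - 1)).eval (x - b)) * hcast
  · linear_combination
      (a ^ 2 * ((n : ℝ) / 2) * Real.exp (c ^ 2 - b ^ 2) * x) * ode (n - 1) (x - b)
      + ode n (x - c)
      - (a ^ 2 * Real.exp (c ^ 2 - b ^ 2) * x * (h (n - 1)).eval (x - b)) * hcast

theorem QHer_eigenfunction_general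
    (b c : ℝ) (a : ℝ)
    (h : ℕ → Polynomial ℝ)
    (hmonic : ∀ n, (h n).Monic) (hdeg : ∀ n, (h n).natDegree = n)
    (horth : ∀ n m : ℕ, n ≠ m →
      ∫ x : ℝ, (h n).eval x * (h m).eval x * Real.exp (-x ^ 2) = 0) :
    ∀ (n : ℕ) (x : ℝ),
      (Matrix.of fun i j : Fin 2 =>
          deriv (fun y => deriv (fun z => QHer b c a h n z i j) y) x)
      + (Matrix.of fun i j : Fin 2 =>
          deriv (fun y => QHer b c a h n y i j) x) *
          !![-2 * x + 2 * b, 2 * a * x * (c - b) + 2 * a; 0, -2 * x + 2 * c]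
      + QHer b c a h n x * !![-2, 2 * a * c; 0, 0]
      = !![-2 * (n : ℝ) - 2, 0; 0, -2 * (n : ℝ)] * QHer b c a h n x := by
  let S : Polynomial.Sequence ℝ :=
    ⟨h, fun n => by rw [degree_eq_natDegree (hmonic n).ne_zero, hdeg]⟩
  have hode (m : ℕ) : hermiteOp (h m) + (2 * m : ℝ) • h m = 0 :=
    hermiteOp_add_smul_eq_zero S (fun i j hij => by
      simpa [gaussForm_apply, gaussIntegral_apply, mul_assoc] using horth i j hij) m
  intro n x
  simp only [deriv_QHer_apply, Polynomial.deriv]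
  rw [← QHerPoly_map_eval]
  exact QHerPoly_eigen_eval b c a hode n x

/-- The 2×2 Hermite-type polynomials `Qₙ` are eigenfunctions of the second-order
differential operator
`D = ∂² I + ∂ [[−2x+2b, 2ax(c−b)+2a], [0, −2x+2c]] + [[−2, 2ac], [0, 0]]`
with eigenvalue `diag(−2n−2, −2n)`. -/
theorem QHer_eigenfunction
    (b c : ℝ) (a : ℝ) (ha : a ≠ 0)
    (h : ℕ → Polynomial ℝ)
    (hmonic : ∀ n, (h n).Monic) (hdeg : ∀ n, (h n).natDegree = n)
    (horth : ∀ n m : ℕ, n ≠ m →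
      ∫ x : ℝ, (h n).eval x * (h m).eval x * Real.exp (-x ^ 2) = 0) :
    ∀ (n : ℕ) (x : ℝ),
      (Matrix.of fun i j : Fin 2 =>
          deriv (fun y => deriv (fun z => QHer b c a h n z i j) y) x)
      + (Matrix.of fun i j : Fin 2 =>
          deriv (fun y => QHer b c a h n y i j) x) *
          !![-2 * x + 2 * b, 2 * a * x * (c - b) + 2 * a; 0, -2 * x + 2 * c]
      + QHer b c a h n x * !![-2, 2 * a * c; 0, 0]
      = !![-2 * (n : ℝ) - 2, 0; 0, -2 * (n : ℝ)] * QHer b c a h n x :=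
  QHer_eigenfunction_general b c a h hmonic hdeg horth

end
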